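/- arXiv:2503.11184 — 7 statements merged into one kernel-verified Lean document; each statement's English description precedes it below -/
import Mathlib

section
/- Let A be an abelian category, X a subcategory of A, and n a nonnegative integer. Define F_0(X) = A and F_{k+1}(X) to be the smallest torsion-free class of F_k(X) containing X. Then F_n(X) is the smallest n-fold torsion-free class of A containing X. -/
open CategoryTheory CategoryTheory.Limits

universe w v u

namespace Paper

variable {C : Type u} [Category.{v} C] [Abelian C]

/-- A predicate on objects is closed under isomorphisms. -/
def IsoClosedP (P : C → Prop) : Prop := ∀ ⦃A B : C⦄, (A ≅ B) → P A → P B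

/-- `P` is closed under extensions in the ambient abelian category. -/
def ClosedUnderExtensions (P : C → Prop) : Prop :=
  ∀ (S : ShortComplex C), S.ShortExact → P S.X₁ → P S.X₃ → P S.X₂

/-- `P ⊆ E` is closed under conflations in `E` (short exact sequences all of whose
terms belong to `E`). -/
def ClosedUnderConflations (E P : C → Prop) : Prop :=
  ∀ (S : ShortComplex C), S.ShortExact → E S.X₁ → E S.X₂ → E S.X₃ →
    P S.X₁ → P S.X₃ → P S.X₂

/-- `P` is closed under admissible subobjects in `E`. -/
def ClosedUnderAdmissibleSubobjects (E P : C → Prop) : Prop :=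
  ∀ (S : ShortComplex C), S.ShortExact → E S.X₁ → E S.X₂ → E S.X₃ →
    P S.X₂ → P S.X₁

/-- `P` is closed under admissible quotients in `E`. -/
def ClosedUnderAdmissibleQuotients (E P : C → Prop) : Prop :=
  ∀ (S : ShortComplex C), S.ShortExact → E S.X₁ → E S.X₂ → E S.X₃ →
    P S.X₂ → P S.X₃

/-- `P` is a torsion-free class of the extension-closed subcategory `E`. -/
def IsTorsionFreeClassOf (E P : C → Prop) : Prop :=
  IsoClosedP P ∧ (∀ M, P M → E M) ∧ ClosedUnderConflations E P ∧
    ClosedUnderAdmissibleSubobjects E P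

/-- `P` is a torsion class of the extension-closed subcategory `E`. -/
def IsTorsionClassOf (E P : C → Prop) : Prop :=
  IsoClosedP P ∧ (∀ M, P M → E M) ∧ ClosedUnderConflations E P ∧
    ClosedUnderAdmissibleQuotients E P

/-- `F` is the smallest torsion-free class of `E` containing `X`. -/
def IsSmallestTorsionFreeClassOf (E X F : C → Prop) : Prop :=
  IsTorsionFreeClassOf E F ∧ (∀ M, X M → F M) ∧
    ∀ G, IsTorsionFreeClassOf E G → (∀ M, X M → G M) → ∀ M, F M → G M

/-- `F` is the smallest torsion class of `E` containing `X`. -/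
def IsSmallestTorsionClassOf (E X F : C → Prop) : Prop :=
  IsTorsionClassOf E F ∧ (∀ M, X M → F M) ∧
    ∀ G, IsTorsionClassOf E G → (∀ M, X M → G M) → ∀ M, F M → G M

/-- `X` is an `n`-fold torsion-free class of the ambient subcategory `Amb`. -/
def IsNFoldTorsionFreeClass (Amb X : C → Prop) (n : ℕ) : Prop :=
  ∃ F : ℕ → (C → Prop), F 0 = Amb ∧ F n = X ∧
    ∀ i, i < n → IsTorsionFreeClassOf (F i) (F (i+1))

/-- `X` is an `n`-fold torsion class of the ambient subcategory `Amb`. -/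
def IsNFoldTorsionClass (Amb X : C → Prop) (n : ℕ) : Prop :=
  ∃ T : ℕ → (C → Prop), T 0 = Amb ∧ T n = X ∧
    ∀ i, i < n → IsTorsionClassOf (T i) (T (i+1))

/-- `X` is closed under `m`-kernels: for every exact sequence
`0 → M → X^0 → ⋯ → X^m` with all `X^i ∈ X` we have `M ∈ X`. -/
def ClosedUnderNKernels (X : C → Prop) (m : ℕ) : Prop :=
  ∀ (F : ComposableArrows C (m+1)), F.Exact →
    Mono (F.map' 0 1 (by omega) (by omega)) →
    (∀ (i : ℕ) (hi : i ≤ m), X (F.obj ⟨i+1, by omega⟩)) →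
    X (F.obj ⟨0, by omega⟩)

/-- `M` has `X`-resolution dimension at most `j`: there is an exact sequence
`0 → X_j → ⋯ → X_0 → M → 0` with all `X_i ∈ X`. -/
def ResDimLE (X : C → Prop) (j : ℕ) (M : C) : Prop :=
  ∃ F : ComposableArrows C (j+1), F.Exact ∧
    Mono (F.map' 0 1 (by omega) (by omega)) ∧
    Epi (F.map' j (j+1) (by omega) (by omega)) ∧
    (∀ (i : ℕ) (hi : i ≤ j), X (F.obj ⟨i, by omega⟩)) ∧
    F.obj ⟨j+1, by omega⟩ = M


theorem statement3 (X : C → Prop) (n : ℕ) (F : ℕ → (C → Prop))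
    (hF0 : F 0 = fun _ => True)
    (hF : ∀ k, k < n → IsSmallestTorsionFreeClassOf (F k) X (F (k+1))) :
    IsNFoldTorsionFreeClass (fun _ => True) (F n) n ∧ (∀ M, X M → F n M) ∧
      ∀ G, IsNFoldTorsionFreeClass (fun _ => True) G n → (∀ M, X M → G M) →
        ∀ M, F n M → G M := by
  have hXF : ∀ k, k ≤ n → ∀ M, X M → F k M := by
    intro k hk
    cases k with
    | zero => intro M _; rw [hF0]; trivial
    | succ j => exact (hF j (by omega)).2.1
  refine ⟨⟨F, hF0, rfl, fun i hi => (hF i hi).1⟩, hXF n le_rfl, ?_⟩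
  rintro G ⟨T, hT0, hTn, hT⟩ hXG
  have hTsub : ∀ i, i < n → ∀ M, T (i+1) M → T i M := fun i hi => (hT i hi).2.1
  have hdesc : ∀ j, j ≤ n → ∀ M, T n M → T (n - j) M := by
    intro j hj
    induction j with
    | zero => simp
    | succ d ih =>
      intro M hM
      have h1 : n - d = (n - (d+1)) + 1 := by omega
      have h2 := ih (by omega) M hM
      rw [h1] at h2
      exact hTsub (n - (d+1)) (by omega) M h2
  have hXT : ∀ k, k ≤ n → ∀ M, X M → T k M := by
    intro k hk M hM
    have h1 : T n M := by rw [hTn]; exact hXG M hM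
    have h2 := hdesc (n - k) (by omega) M h1
    rwa [show n - (n - k) = k by omega] at h2
  have hFk_sub : ∀ k, k ≤ n → ∀ M, F k M → T k M := by
    intro k
    induction k with
    | zero => intro _ M _; rw [hT0]; trivial
    | succ j ih =>
      intro hj M hM
      have hij := ih (by omega)
      have hFj_iso : IsoClosedP (F j) := by
        cases j with
        | zero => rw [hF0]; intro A B _ _; trivial
        | succ i => exact (hF i (by omega)).1.1
      obtain ⟨hiso, hsub, hconf, hadm⟩ := hT j (by omega)
      have hTfc : IsTorsionFreeClassOf (F j) (fun M => T (j+1) M ∧ F j M) := by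
        refine ⟨?_, fun M h => h.2, ?_, ?_⟩
        · intro A B e h
          exact ⟨hiso e h.1, hFj_iso e h.2⟩
        · intro S hS h1 h2 h3 hp1 hp3
          exact ⟨hconf S hS (hij _ h1) (hij _ h2) (hij _ h3) hp1.1 hp3.1, h2⟩
        · intro S hS h1 h2 h3 hp2
          exact ⟨hadm S hS (hij _ h1) (hij _ h2) (hij _ h3) hp2.1, h1⟩
      exact ((hF j (by omega)).2.2 _ hTfc
        (fun M hX => ⟨hXT (j+1) (by omega) M hX, hXF j (by omega) M hX⟩) M hM).1
  intro M hM
  have h := hFk_sub n le_rfl M hM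
  rwa [hTn] at h
end Paper
end

section
/- Let A be an abelian category, X a subcategory, and n a positive integer. Then X is an n-fold torsion-free class of A if and only if X is a torsion-free class of F_{n-1}(X), the (n−1)-fold torsion-free closure of X. -/
open CategoryTheory CategoryTheory.Limits

universe w v u

namespace Paper

variable {C : Type u} [Category.{v} C] [Abelian C]

theorem statement4 (X : C → Prop) (n : ℕ) (hn : 0 < n) (F : ℕ → (C → Prop))
    (hF0 : F 0 = fun _ => True)
    (hF : ∀ k, k + 1 < n → IsSmallestTorsionFreeClassOf (F k) X (F (k+1))) :
    IsNFoldTorsionFreeClass (fun _ => True) X n ↔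
      IsTorsionFreeClassOf (F (n-1)) X := by
  constructor
  · rintro ⟨G, hG0, hGn, hGi⟩
    subst hGn
    have hmono : ∀ i j, i ≤ j → j ≤ n → ∀ M, G j M → G i M := by
      intro i j hij hjn
      induction j with
      | zero =>
        intro M hM
        have : i = 0 := by omega
        subst this; exact hM
      | succ j ih =>
        intro M hM
        rcases Nat.lt_or_ge i (j+1) with h | h
        · exact ih (by omega) (by omega) M ((hGi j (by omega)).2.1 M hM)
        · have : i = j+1 := by omega
          subst this; exact hM
    have hXF : ∀ k, k ≤ n - 1 → ∀ M, G n M → F k M := by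
      intro k hk
      cases k with
      | zero => rw [hF0]; intro M _; trivial
      | succ m => exact fun M hM => (hF m (by omega)).2.1 M hM
    have hFiso : ∀ k, k ≤ n - 1 → IsoClosedP (F k) := by
      intro k hk
      cases k with
      | zero => rw [hF0]; intro A B _ _; trivial
      | succ m => exact (hF m (by omega)).1.1
    have hFG : ∀ k, k ≤ n - 1 → ∀ M, F k M → G k M := by
      intro k
      induction k with
      | zero => rw [hF0, hG0]; intro _ M _; trivial
      | succ k ih =>
        intro hk
        have hk' : k + 1 < n := by omega
        have hik : ∀ M, F k M → G k M := ih (by omega)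
        have hG' : IsTorsionFreeClassOf (F k) (fun M => G (k+1) M ∧ F k M) := by
          refine ⟨?_, ?_, ?_, ?_⟩
          · intro A B e hA
            exact ⟨(hGi k (by omega)).1 e hA.1, hFiso k (by omega) e hA.2⟩
          · exact fun M hM => hM.2
          · intro S hS h1 h2 h3 hx1 hx3
            exact ⟨(hGi k (by omega)).2.2.1 S hS (hik _ h1) (hik _ h2) (hik _ h3) hx1.1 hx3.1, h2⟩
          · intro S hS h1 h2 h3 hx2
            exact ⟨(hGi k (by omega)).2.2.2 S hS (hik _ h1) (hik _ h2) (hik _ h3) hx2.1, h1⟩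
        intro M hM
        exact ((hF k hk').2.2 _ hG'
          (fun M hM => ⟨hmono (k+1) n (by omega) le_rfl M hM, hXF k (by omega) M hM⟩)
          M hM).1
    have hn1 : n - 1 + 1 = n := by omega
    have hlast := hGi (n-1) (by omega)
    rw [hn1] at hlast
    refine ⟨hlast.1, hXF (n-1) le_rfl, ?_, ?_⟩
    · intro S hS h1 h2 h3 hx1 hx3
      exact hlast.2.2.1 S hS (hFG _ le_rfl _ h1) (hFG _ le_rfl _ h2)
        (hFG _ le_rfl _ h3) hx1 hx3
    · intro S hS h1 h2 h3 hx2
      exact hlast.2.2.2 S hS (hFG _ le_rfl _ h1) (hFG _ le_rfl _ h2)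
        (hFG _ le_rfl _ h3) hx2
  · intro h
    refine ⟨fun i => if i < n then F i else X, ?_, ?_, ?_⟩
    · simp [hn, hF0]
    · simp
    · intro i hi
      by_cases h2 : i + 1 < n
      · simpa [hi, h2] using (hF i h2).1
      · have : i = n - 1 := by omega
        subst this
        simpa [hi, h2] using h
end Paper
end

section
/- Let A be an abelian category and n a positive integer. Every n-fold torsion-free class of A is a K^{(n-1)}E-closed subcategory of A, i.e., it is closed under extensions and under (n−1)-kernels. -/
open CategoryTheory CategoryTheory.Limits

universe w v u

namespace Paper

variable {C : Type u} [Category.{v} C] [Abelian C]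

lemma auxZero {A B D : C} (f : A ⟶ B) (g : B ⟶ D) (w : f ≫ g = 0) :
    Abelian.image.ι f ≫ Abelian.factorThruImage g = 0 := by
  rw [← cancel_mono (Abelian.image.ι g), Category.assoc, Abelian.image.fac, zero_comp]
  exact Abelian.image_ι_comp_eq_zero w

lemma auxSES (S : ShortComplex C) (hS : S.Exact) :
    (ShortComplex.mk (Abelian.image.ι S.f) (Abelian.factorThruImage S.g)
      (auxZero S.f S.g S.zero)).ShortExact := by
  have e1 := (S.exact_iff_exact_image_ι).mp hS
  have e2 : (ShortComplex.mk (Abelian.image.ι S.f) (Abelian.factorThruImage S.g)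
      (auxZero S.f S.g S.zero)).Exact := by
    let φ : (ShortComplex.mk (Abelian.image.ι S.f) (Abelian.factorThruImage S.g)
        (auxZero S.f S.g S.zero)) ⟶
        (ShortComplex.mk (Abelian.image.ι S.f) S.g (Abelian.image_ι_comp_eq_zero S.zero)) :=
      { τ₁ := 𝟙 _, τ₂ := 𝟙 _, τ₃ := Abelian.image.ι S.g,
        comm₁₂ := by simp, comm₂₃ := by simp [Abelian.image.fac] }
    rw [ShortComplex.exact_iff_of_epi_of_isIso_of_mono φ]
    exact e1
  exact { exact := e2 }

lemma lastSES {A B : C} (f : A ⟶ B) :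
    (ShortComplex.mk (Abelian.image.ι f) (cokernel.π f)
      (kernel.condition _)).ShortExact :=
  { exact := ShortComplex.exact_of_f_is_kernel _ (kernelIsKernel _) }

theorem statement5 (X : C → Prop) (n : ℕ) (hn : 0 < n)
    (h : IsNFoldTorsionFreeClass (fun _ => True) X n) :
    ClosedUnderExtensions X ∧ ClosedUnderNKernels X (n-1) := by
  obtain ⟨Fc, h0, hnX, hstep⟩ := h
  -- chain inclusions
  have chain1 : ∀ k, k < n → ∀ M, Fc (k+1) M → Fc k M := fun k hk => (hstep k hk).2.1
  have chainLe : ∀ j, j ≤ n → ∀ k, k ≤ j → ∀ M, Fc j M → Fc k M := by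
    intro j
    induction j with
    | zero => intro _ k hk M hM
              obtain rfl : k = 0 := by omega
              exact hM
    | succ j ihj => intro hj k hk M hM
                    rcases Nat.lt_or_ge k (j+1) with hlt | hge
                    · exact ihj (by omega) k (by omega) M (chain1 j (by omega) M hM)
                    · have : k = j + 1 := by omega
                      subst this; exact hM
  have chainX : ∀ k, k ≤ n → ∀ M, X M → Fc k M := by
    intro k hk M hM
    exact chainLe n le_rfl k hk M (by rw [hnX]; exact hM)
  -- each Fc k is closed under extensions in the ambient abelian category
  have extcl : ∀ k, k ≤ n → ClosedUnderExtensions (Fc k) := by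
    intro k
    induction k with
    | zero => intro _ S hS _ _; rw [h0]; trivial
    | succ k ihk =>
        intro hk S hS h1 h3
        have hmid : Fc k S.X₂ := ihk (by omega) S hS
          (chain1 k (by omega) _ h1) (chain1 k (by omega) _ h3)
        exact (hstep k (by omega)).2.2.1 S hS
          (chain1 k (by omega) _ h1) hmid (chain1 k (by omega) _ h3) h1 h3
  obtain ⟨m, rfl⟩ : ∃ m, n = m + 1 := ⟨n - 1, by omega⟩
  constructor
  · intro S hS h1 h3
    rw [← hnX]
    exact extcl (m+1) le_rfl S hS (by rw [hnX]; exact h1) (by rw [hnX]; exact h3)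
  · intro F hFE hmono hX
    have claim : ∀ k, k ≤ m + 1 → ∀ i, ∀ hi : i ≤ m, k + i ≤ m + 1 →
        Fc k (Abelian.image (F.map' i (i+1) (by omega) (by omega))) := by
      intro k
      induction k with
      | zero => intro _ i hi _; rw [h0]; trivial
      | succ k ihk =>
          intro hk i hi hki
          have closure := (hstep k (by omega)).2.2.2
          rcases Nat.lt_or_ge i m with hlt | hge
          · exact closure
              (ShortComplex.mk
                (Abelian.image.ι (F.map' i (i+1) (by omega) (by omega)))
                (Abelian.factorThruImage (F.map' (i+1) (i+2) (by omega) (by omega)))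
                (auxZero _ _ (hFE.toIsComplex.zero' i (i+1) (i+2) rfl rfl (by omega))))
              (auxSES (F.sc' hFE.toIsComplex i (i+1) (i+2) rfl rfl (by omega))
                (hFE.exact' i (i+1) (i+2) rfl rfl (by omega)))
              (ihk (by omega) i hi (by omega))
              (chainX k (by omega) _ (hX i hi))
              (ihk (by omega) (i+1) (by omega) (by omega))
              (chainX (k+1) (by omega) _ (hX i hi))
          · have him : i = m := by omega
            subst him
            have hk0 : k = 0 := by omega
            subst hk0
            exact closure
              (ShortComplex.mk
                (Abelian.image.ι (F.map' i (i+1) (by omega) (by omega)))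
                (cokernel.π (F.map' i (i+1) (by omega) (by omega)))
                (kernel.condition _))
              (lastSES _)
              (by rw [h0]; trivial) (by rw [h0]; trivial) (by rw [h0]; trivial)
              (chainX 1 (by omega) _ (hX i hi))
    have key : Fc (m+1) (Abelian.image (F.map' 0 1 (by omega) (by omega))) :=
      claim (m+1) le_rfl 0 (by omega) (by omega)
    rw [← hnX]
    haveI : Mono (F.map' 0 1 (by omega) (by omega)) := hmono
    exact (hstep m (by omega)).1
      (asIso (Abelian.factorThruImage (F.map' 0 1 (by omega) (by omega)))).symm key
end Paper
end

section
/- Let A be an abelian category, X an additive subcategory, and n a nonnegative integer. An object M of A belongs to Ker^n_X(X) if and only if there exists a short exact sequence 0 → M → X' → F → 0 in A with X' ∈ X and F ∈ (sub-closure of X)^{*n}, the n-fold extension power of the subobject closure of X. -/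
open CategoryTheory CategoryTheory.Limits ZeroObject

universe w v u

namespace Paper

variable {C : Type u} [Category.{v} C] [Abelian C]

/-- `P` is closed under kernels of morphisms to objects of `Y`. -/
def KerRelClosed (Y P : C → Prop) : Prop :=
  IsoClosedP P ∧ ∀ ⦃A B : C⦄ (f : A ⟶ B), P A → Y B → P (kernel f)

/-- `P` is closed under kernels of morphisms between its objects. -/
def KernelClosed (P : C → Prop) : Prop :=
  IsoClosedP P ∧ ∀ ⦃A B : C⦄ (f : A ⟶ B), P A → P B → P (kernel f)

/-- `Ker^n_Y(X)`: iterated kernels of morphisms to `Y`, starting from `X`. -/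
def kerIter (X Y : C → Prop) : ℕ → (C → Prop)
  | 0 => X
  | (n+1) => fun K => ∃ (M Y' : C) (i : K ⟶ M) (p : M ⟶ Y') (w : i ≫ p = 0),
      kerIter X Y n M ∧ Y Y' ∧ Mono i ∧ (ShortComplex.mk i p w).Exact

/-- The subobject closure of `X`. -/
def SubClosure (X : C → Prop) : C → Prop :=
  fun S => ∃ (B : C) (i : S ⟶ B), Mono i ∧ X B

/-- `P^{*n}`: the `n`-fold extension power of `P` (`P^{*0}` consists of zero objects). -/
def ExtPow (P : C → Prop) : ℕ → (C → Prop)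
  | 0 => fun M => IsZero M
  | (n+1) => fun M => ∃ (A B : C) (f : A ⟶ M) (g : M ⟶ B) (w : f ≫ g = 0),
      (ShortComplex.mk f g w).ShortExact ∧ ExtPow P n A ∧ P B

section Helpers


/-- The kernel short complex of an epimorphism is short exact. -/
lemma shortExact_kernelSeq {E Q : C} (h : E ⟶ Q) [Epi h] :
    (ShortComplex.mk (kernel.ι h) h (kernel.condition h)).ShortExact :=
  { exact := ShortComplex.exact_of_f_is_kernel _ (kernelIsKernel h) }

/-- The cokernel short complex of a monomorphism is short exact. -/
lemma shortExact_cokernelSeq {A E : C} (h : A ⟶ E) [Mono h] :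
    (ShortComplex.mk h (cokernel.π h) (cokernel.condition h)).ShortExact :=
  { exact := ShortComplex.exact_of_g_is_cokernel _ (cokernelIsCokernel h) }

lemma shortExact_id_zero (M : C) :
    (ShortComplex.mk (𝟙 M) (0 : M ⟶ (0 : C)) (by simp)).ShortExact := by
  have hepi : Epi (0 : M ⟶ (0 : C)) := ⟨fun g h _ => (isZero_zero C).eq_of_src g h⟩
  exact { exact := (ShortComplex.exact_iff_epi _ rfl).2 inferInstance,
          epi_g := hepi }

lemma shortExact_zero_id (M : C) :
    (ShortComplex.mk (0 : (0 : C) ⟶ M) (𝟙 M) (by simp)).ShortExact := by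
  have hmono : Mono (0 : (0 : C) ⟶ M) := ⟨fun g h _ => (isZero_zero C).eq_of_tgt g h⟩
  exact { exact := (ShortComplex.exact_iff_mono _ rfl).2 inferInstance,
          mono_f := hmono }

/-- Postcomposing the second map with a mono preserves exactness. -/
lemma exact_comp_mono {A E B B' : C} (f : A ⟶ E) (g : E ⟶ B) (m : B ⟶ B') [Mono m]
    (w : f ≫ g = 0) (h : (ShortComplex.mk f g w).Exact)
    (w' : f ≫ (g ≫ m) = 0) : (ShortComplex.mk f (g ≫ m) w').Exact := by
  rw [ShortComplex.exact_iff_exact_up_to_refinements]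
  intro T x hx
  dsimp at hx ⊢
  have hx' : x ≫ g = 0 := by
    rw [← cancel_mono m, Category.assoc, zero_comp]
    simpa using hx
  exact h.exact_up_to_refinements x hx'

/-- Cancelling a mono after the second map preserves exactness. -/
lemma exact_of_comp_mono {A E B B' : C} (f : A ⟶ E) (g : E ⟶ B) (m : B ⟶ B') [Mono m]
    (p' : E ⟶ B') (hfac : g ≫ m = p') (w' : f ≫ p' = 0)
    (h : (ShortComplex.mk f p' w').Exact)
    (w : f ≫ g = 0) : (ShortComplex.mk f g w).Exact := by
  rw [ShortComplex.exact_iff_exact_up_to_refinements]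
  intro T x hx
  dsimp at hx ⊢
  refine h.exact_up_to_refinements x ?_
  dsimp
  calc x ≫ p' = (x ≫ g) ≫ m := by rw [Category.assoc, hfac]
  _ = 0 := by rw [hx, zero_comp]

/-- Pulling back a short exact sequence along an admissible subobject of its quotient. -/
lemma pullback_ses {A E B B₁ Q : C} (f : A ⟶ E) (g : E ⟶ B) (wfg : f ≫ g = 0)
    (hfg : (ShortComplex.mk f g wfg).ShortExact)
    (b : B₁ ⟶ B) (q : B ⟶ Q) (wbq : b ≫ q = 0)
    (hbq : (ShortComplex.mk b q wbq).ShortExact) :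
    ∃ (E₁ : C) (ι : E₁ ⟶ E) (π : E₁ ⟶ B₁) (f' : A ⟶ E₁)
      (w₁ : f' ≫ π = 0) (w₂ : ι ≫ (g ≫ q) = 0),
      (ShortComplex.mk f' π w₁).ShortExact ∧ (ShortComplex.mk ι (g ≫ q) w₂).ShortExact := by
  have hmf : Mono f := hfg.mono_f
  have heg : Epi g := hfg.epi_g
  have hmb : Mono b := hbq.mono_f
  have heq : Epi q := hbq.epi_g
  have hgq : Epi (g ≫ q) := epi_comp g q
  set ι : kernel (g ≫ q) ⟶ E := kernel.ι (g ≫ q) with hι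
  have hS2 : (ShortComplex.mk ι (g ≫ q) (kernel.condition _)).ShortExact :=
    shortExact_kernelSeq (g ≫ q)
  have hf'cond : f ≫ (g ≫ q) = 0 := by rw [← Category.assoc, wfg, zero_comp]
  set f' : A ⟶ kernel (g ≫ q) := kernel.lift (g ≫ q) f hf'cond with hf'
  have hf'ι : f' ≫ ι = f := kernel.lift_ι _ _ _
  have hmf' : Mono f' := mono_of_mono_fac hf'ι
  have hπcond : (ι ≫ g) ≫ q = 0 := by rw [Category.assoc]; exact kernel.condition _
  set π : kernel (g ≫ q) ⟶ B₁ := hbq.exact.lift (ι ≫ g) hπcond with hπ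
  have hπb : π ≫ b = ι ≫ g := hbq.exact.lift_f _ _
  have w₁ : f' ≫ π = 0 := by
    rw [← cancel_mono b, Category.assoc, hπb, zero_comp, ← Category.assoc, hf'ι, wfg]
  have heπ : Epi π := by
    rw [epi_iff_surjective_up_to_refinements]
    intro T y
    obtain ⟨T', ρ, hρ, e, he⟩ := surjective_up_to_refinements_of_epi g (y ≫ b)
    have hcond : e ≫ (g ≫ q) = 0 := by
      rw [← Category.assoc, ← he, Category.assoc, Category.assoc, wbq, comp_zero, comp_zero]
    refine ⟨T', ρ, hρ, kernel.lift (g ≫ q) e hcond, ?_⟩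
    rw [← cancel_mono b]
    calc (ρ ≫ y) ≫ b = ρ ≫ (y ≫ b) := Category.assoc _ _ _
    _ = e ≫ g := he
    _ = (kernel.lift (g ≫ q) e hcond ≫ ι) ≫ g := by rw [kernel.lift_ι]
    _ = (kernel.lift (g ≫ q) e hcond ≫ π) ≫ b := by
        rw [Category.assoc, Category.assoc, hπb]
  have hex : (ShortComplex.mk f' π w₁).Exact := by
    rw [ShortComplex.exact_iff_exact_up_to_refinements]
    intro T x hx
    dsimp at hx ⊢
    have hxg : (x ≫ ι) ≫ g = 0 := by
      rw [Category.assoc, ← hπb, ← Category.assoc, hx, zero_comp]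
    obtain ⟨T', ρ, hρ, a, ha⟩ := hfg.exact.exact_up_to_refinements (x ≫ ι) hxg
    dsimp at ha
    refine ⟨T', ρ, hρ, a, ?_⟩
    rw [← cancel_mono ι]
    calc (ρ ≫ x) ≫ ι = ρ ≫ (x ≫ ι) := Category.assoc _ _ _
    _ = a ≫ f := ha
    _ = (a ≫ f') ≫ ι := by rw [Category.assoc, hf'ι]
  exact ⟨kernel (g ≫ q), ι, π, f', w₁, kernel.condition _, { exact := hex }, hS2⟩

/-- Pushing out a short exact sequence along an admissible quotient of its subobject. -/
lemma pushout_ses {K A A₂ E B : C} (k : K ⟶ A) (a : A ⟶ A₂) (wka : k ≫ a = 0)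
    (hka : (ShortComplex.mk k a wka).ShortExact)
    (f : A ⟶ E) (g : E ⟶ B) (wfg : f ≫ g = 0)
    (hfg : (ShortComplex.mk f g wfg).ShortExact) :
    ∃ (E₂ : C) (π : E ⟶ E₂) (j : A₂ ⟶ E₂) (g' : E₂ ⟶ B)
      (w₁ : j ≫ g' = 0) (w₂ : (k ≫ f) ≫ π = 0),
      (ShortComplex.mk j g' w₁).ShortExact ∧ (ShortComplex.mk (k ≫ f) π w₂).ShortExact := by
  have hmk : Mono k := hka.mono_f
  have hea : Epi a := hka.epi_g
  have hmf : Mono f := hfg.mono_f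
  have heg : Epi g := hfg.epi_g
  have hmkf : Mono (k ≫ f) := mono_comp k f
  set π : E ⟶ cokernel (k ≫ f) := cokernel.π (k ≫ f) with hπdef
  have hK : (ShortComplex.mk (k ≫ f) π (cokernel.condition _)).ShortExact :=
    shortExact_cokernelSeq (k ≫ f)
  have hjcond : k ≫ (f ≫ π) = 0 := by rw [← Category.assoc]; exact cokernel.condition _
  set j : A₂ ⟶ cokernel (k ≫ f) := hka.exact.desc (f ≫ π) hjcond with hjdef
  have haj : a ≫ j = f ≫ π := hka.exact.g_desc _ _
  have hg'cond : (k ≫ f) ≫ g = 0 := by rw [Category.assoc, wfg, comp_zero]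
  set g' : cokernel (k ≫ f) ⟶ B := cokernel.desc (k ≫ f) g hg'cond with hg'def
  have hπg' : π ≫ g' = g := cokernel.π_desc _ _ _
  have w₁ : j ≫ g' = 0 := by
    rw [← cancel_epi a, ← Category.assoc, haj, Category.assoc, hπg', wfg, comp_zero]
  have heg' : Epi g' := epi_of_epi_fac hπg'
  have hmj : Mono j := by
    rw [Preadditive.mono_iff_cancel_zero]
    intro T x hx
    obtain ⟨T', ρ, hρ, y, hy⟩ := surjective_up_to_refinements_of_epi a x
    have h1 : (y ≫ f) ≫ π = 0 := by
      rw [Category.assoc, ← haj, ← Category.assoc, ← hy, Category.assoc, hx, comp_zero]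
    obtain ⟨T'', σ, hσ, z, hz⟩ := hK.exact.exact_up_to_refinements (y ≫ f) h1
    dsimp at hz
    have h2 : σ ≫ y = z ≫ k := by
      rw [← cancel_mono f]
      calc (σ ≫ y) ≫ f = σ ≫ y ≫ f := Category.assoc _ _ _
      _ = z ≫ (k ≫ f) := hz
      _ = (z ≫ k) ≫ f := (Category.assoc _ _ _).symm
    have h3 : (σ ≫ ρ) ≫ x = 0 := by
      calc (σ ≫ ρ) ≫ x = σ ≫ (ρ ≫ x) := Category.assoc _ _ _
      _ = (σ ≫ y) ≫ a := by rw [hy, Category.assoc]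
      _ = z ≫ (k ≫ a) := by rw [h2, Category.assoc]
      _ = 0 := by rw [wka, comp_zero]
    exact zero_of_epi_comp (σ ≫ ρ) h3
  have hex : (ShortComplex.mk j g' w₁).Exact := by
    rw [ShortComplex.exact_iff_exact_up_to_refinements]
    intro T x hx
    dsimp at hx ⊢
    obtain ⟨T', ρ, hρ, y, hy⟩ := surjective_up_to_refinements_of_epi π x
    have h1 : y ≫ g = 0 := by
      rw [← hπg', ← Category.assoc, ← hy, Category.assoc, hx, comp_zero]
    obtain ⟨T'', σ, hσ, u, hu⟩ := hfg.exact.exact_up_to_refinements y h1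
    dsimp at hu
    refine ⟨T'', σ ≫ ρ, epi_comp σ ρ, u ≫ a, ?_⟩
    calc (σ ≫ ρ) ≫ x = σ ≫ (ρ ≫ x) := Category.assoc _ _ _
    _ = (σ ≫ y) ≫ π := by rw [hy, Category.assoc]
    _ = u ≫ (f ≫ π) := by rw [hu, Category.assoc]
    _ = (u ≫ a) ≫ j := by rw [← haj, Category.assoc]
  exact ⟨cokernel (k ≫ f), π, j, g', w₁, cokernel.condition _, { exact := hex }, hK⟩

end Helpers

section ExtPowLemmas

lemma extPow_isoClosed (P : C → Prop) : ∀ n : ℕ, IsoClosedP (ExtPow P n)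
  | 0 => fun A B e h => (show IsZero A from h).of_iso e.symm
  | (n+1) => by
    rintro M M' e ⟨A, B, f, g, w, hse, hA, hB⟩
    refine ⟨A, B, f ≫ e.hom, e.inv ≫ g,
      by rw [Category.assoc, Iso.hom_inv_id_assoc, w], ?_, hA, hB⟩
    exact ShortComplex.shortExact_of_iso
      (ShortComplex.isoMk (Iso.refl A) e (Iso.refl B) (by simp) (by simp)) hse

lemma subClosure_isoClosed (X : C → Prop) : IsoClosedP (SubClosure X) := by
  rintro A B e ⟨W, i, hi, hW⟩
  have : Mono i := hi
  exact ⟨W, e.inv ≫ i, mono_comp _ _, hW⟩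

lemma extPow_cons (P : C → Prop) (hP : IsoClosedP P) :
    ∀ (n : ℕ) {A E B : C} (f : A ⟶ E) (g : E ⟶ B) (w : f ≫ g = 0),
      (ShortComplex.mk f g w).ShortExact → P A → ExtPow P n B → ExtPow P (n+1) E := by
  intro n
  induction n with
  | zero =>
    intro A E B f g w hse hA hB
    have hgz : g = 0 := (show IsZero B from hB).eq_of_tgt g 0
    have : Mono f := hse.mono_f
    have : Epi f := hse.exact.epi_f hgz
    have : IsIso f := isIso_of_mono_of_epi f
    exact ⟨(0 : C), E, 0, 𝟙 E, zero_comp, shortExact_zero_id E,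
      isZero_zero C, hP (asIso f) hA⟩
  | succ n ih =>
    intro A E B f g w hse hA hB
    obtain ⟨B₁, Q, bm, qm, wb, hseb, hB₁, hQ⟩ := hB
    obtain ⟨E₁, ι, π, f', w₁, w₂, hS1, hS2⟩ := pullback_ses f g w hse bm qm wb hseb
    exact ⟨E₁, Q, ι, g ≫ qm, w₂, hS2, ih f' π w₁ hS1 hA hB₁, hQ⟩

lemma extPow_uncons (P : C → Prop) (hP : IsoClosedP P) :
    ∀ (n : ℕ) {M : C}, ExtPow P (n+1) M →
      ∃ (S F : C) (s : S ⟶ M) (r : M ⟶ F) (w : s ≫ r = 0),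
        (ShortComplex.mk s r w).ShortExact ∧ P S ∧ ExtPow P n F := by
  intro n
  induction n with
  | zero =>
    rintro M ⟨Z, S, f, g, w, hse, hZ, hS⟩
    have hfz : f = 0 := (show IsZero Z from hZ).eq_of_src f 0
    have : Epi g := hse.epi_g
    have : Mono g := hse.exact.mono_g hfz
    have : IsIso g := isIso_of_mono_of_epi g
    exact ⟨M, (0 : C), 𝟙 M, 0, comp_zero, shortExact_id_zero M,
      hP (asIso g).symm hS, isZero_zero C⟩
  | succ n ih =>
    rintro M ⟨F₁, S, f, g, w, hse, hF₁, hS⟩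
    obtain ⟨S₁, F₁', s, r, w', hse', hS₁, hF₁'⟩ := ih hF₁
    obtain ⟨E₂, π, j, g', w₁, w₂, hJ, hK⟩ := pushout_ses s r w' hse' f g w hse
    exact ⟨S₁, E₂, s ≫ f, π, w₂, hK, hS₁, ⟨F₁', S, j, g', w₁, hJ, hF₁', hS⟩⟩

end ExtPowLemmas

theorem statement7 (X : C → Prop) (hXiso : IsoClosedP X)
    (hX0 : ∃ Z : C, IsZero Z ∧ X Z) (hXadd : ∀ A B : C, X A → X B → X (A ⊞ B))
    (n : ℕ) (M : C) :
    kerIter X X n M ↔ ∃ (X' F : C) (f : M ⟶ X') (g : X' ⟶ F) (w : f ≫ g = 0),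
      (ShortComplex.mk f g w).ShortExact ∧ X X' ∧ ExtPow (SubClosure X) n F := by
  induction n generalizing M with
  | zero =>
    constructor
    · intro hM
      exact ⟨M, (0 : C), 𝟙 M, 0, comp_zero, shortExact_id_zero M, hM, isZero_zero C⟩
    · rintro ⟨X', F, f, g, w, hse, hX', hF⟩
      have : Mono f := hse.mono_f
      have hgz : g = 0 := (show IsZero F from hF).eq_of_tgt g 0
      have : Epi f := hse.exact.epi_f hgz
      have : IsIso f := isIso_of_mono_of_epi f
      exact hXiso (asIso f).symm hX'
  | succ n ih =>
    constructor
    · rintro ⟨N, Y', i, p, wip, hN, hY', hmono, hexact⟩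
      obtain ⟨X', F, fN, gN, wN, hseN, hX', hF⟩ := (ih N).1 hN
      have : Mono i := hmono
      -- factor p through its image
      set π' : N ⟶ Abelian.image p := Abelian.factorThruImage p with hπ'
      set ι' : Abelian.image p ⟶ Y' := Abelian.image.ι p with hι'
      have hfac : π' ≫ ι' = p := Abelian.image.fac p
      have wiπ : i ≫ π' = 0 := by
        rw [← cancel_mono ι', Category.assoc, hfac, wip, zero_comp]
      have hexπ : (ShortComplex.mk i π' wiπ).Exact :=
        exact_of_comp_mono i π' ι' p hfac wip hexact wiπ
      have hseiπ : (ShortComplex.mk i π' wiπ).ShortExact := { exact := hexπ }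
      obtain ⟨E₂, π, j, g', w₁, w₂, hJ, hK⟩ := pushout_ses i π' wiπ hseiπ fN gN wN hseN
      refine ⟨X', E₂, i ≫ fN, π, w₂, hK, hX', ?_⟩
      exact extPow_cons (SubClosure X) (subClosure_isoClosed X) n j g' w₁ hJ
        ⟨Y', ι', inferInstance, hY'⟩ hF
    · rintro ⟨X', F, f, g, w, hse, hX', hF⟩
      obtain ⟨S, F', s, r, ws, hseS, hSsub, hF'⟩ :=
        extPow_uncons (SubClosure X) (subClosure_isoClosed X) n hF
      obtain ⟨Y', t, ht, hY'⟩ := hSsub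
      have : Mono t := ht
      obtain ⟨E₁, ι, π, f', w₁, w₂, hS1, hS2⟩ := pullback_ses f g w hse s r ws hseS
      have hE₁ : kerIter X X n E₁ := (ih E₁).2 ⟨X', F', ι, g ≫ r, w₂, hS2, hX', hF'⟩
      have wfπt : f' ≫ (π ≫ t) = 0 := by rw [← Category.assoc, w₁, zero_comp]
      refine ⟨E₁, Y', f', π ≫ t, wfπt, hE₁, hY', hS1.mono_f, ?_⟩
      exact exact_comp_mono f' π t w₁ hS1.exact wfπt

end Paper
end

section
/- Let A be an abelian category and X an additive subcategory. Then the following three subcategories coincide: (a) the closure of X under admissible subobjects in F_1(X), the smallest torsion-free class of A containing X; (b) the smallest Ker_X-closed subcategory of A containing X; and (c) the smallest kernel-closed subcategory of A containing X. -/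
open CategoryTheory CategoryTheory.Limits

universe w v u

namespace Paper

variable {C : Type u} [Category.{v} C] [Abelian C]

/-- A torsion-free class of the ambient abelian category:
closed under isomorphisms, subobjects and extensions. -/
def AbsTorsionFreeClass (P : C → Prop) : Prop :=
  IsoClosedP P ∧ (∀ ⦃A B : C⦄ (i : A ⟶ B), Mono i → P B → P A) ∧
    ClosedUnderExtensions P

section Aux

open CategoryTheory.Abelian CategoryTheory.Abelian.Pseudoelement
open scoped Pseudoelement

lemma sesOfMono {A B : C} (f : A ⟶ B) [Mono f] :
    (ShortComplex.mk f (cokernel.π f) (cokernel.condition f)).ShortExact :=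
  ShortComplex.ShortExact.mk'
    (ShortComplex.exact_of_g_is_cokernel _ (cokernelIsCokernel f)) ‹_› inferInstance

noncomputable def sesIsoKernel {S : ShortComplex C} (hS : S.ShortExact) :
    S.X₁ ≅ kernel S.g := by
  have := hS.mono_f
  exact IsLimit.conePointUniqueUpToIso hS.exact.fIsKernel (limit.isLimit _)

lemma noether {K M X' : C} (ι : K ⟶ M) (i : M ⟶ X') [Mono ι] [Mono i] :
    (ShortComplex.mk
      (cokernel.desc ι (i ≫ cokernel.π (ι ≫ i))
        (by rw [← Category.assoc, cokernel.condition]))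
      (cokernel.desc (ι ≫ i) (cokernel.π i)
        (by rw [Category.assoc, cokernel.condition, Limits.comp_zero]))
      (by rw [← cancel_epi (cokernel.π ι)]; simp)).ShortExact := by
  set v := cokernel.desc ι (i ≫ cokernel.π (ι ≫ i))
        (by rw [← Category.assoc, cokernel.condition]) with hv
  set u := cokernel.desc (ι ≫ i) (cokernel.π i)
        (by rw [Category.assoc, cokernel.condition, Limits.comp_zero]) with hu
  have hexKM := (sesOfMono (ι ≫ i)).exact
  have hexMX := (sesOfMono i).exact
  have hmono : Mono v := by
    apply mono_of_zero_of_map_zero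
    intro a ha
    obtain ⟨m, hm⟩ := pseudo_surjective_of_epi (cokernel.π ι) a
    have h1 : (cokernel.π (ι ≫ i)) (i m) = 0 := by
      rw [← Abelian.Pseudoelement.comp_apply, ← cokernel.π_desc ι (i ≫ cokernel.π (ι ≫ i))
        (by rw [← Category.assoc, cokernel.condition]), ← hv,
        Abelian.Pseudoelement.comp_apply, hm, ha]
    obtain ⟨k, hk⟩ := pseudo_exact_of_exact hexKM (i m) h1
    have hk' : i ((ι) k) = i m := by rw [← Abelian.Pseudoelement.comp_apply]; exact hk
    have := pseudo_injective_of_mono i hk'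
    rw [← hm, ← this, ← Abelian.Pseudoelement.comp_apply, cokernel.condition, Abelian.Pseudoelement.zero_apply]
  have hepi : Epi u := epi_of_epi_fac (cokernel.π_desc (ι ≫ i) (cokernel.π i)
        (by rw [Category.assoc, cokernel.condition, Limits.comp_zero]))
  refine ShortComplex.ShortExact.mk' ?_ hmono hepi
  apply Abelian.Pseudoelement.exact_of_pseudo_exact _
  intro b hb
  obtain ⟨x, hx⟩ := pseudo_surjective_of_epi (cokernel.π (ι ≫ i)) b
  have h1 : (cokernel.π i) x = 0 := by
    rw [← cokernel.π_desc (ι ≫ i) (cokernel.π i)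
        (by rw [Category.assoc, cokernel.condition, Limits.comp_zero]), ← hu,
      Abelian.Pseudoelement.comp_apply, hx]
    exact hb
  obtain ⟨m, hm⟩ := pseudo_exact_of_exact hexMX x h1
  refine ⟨(cokernel.π ι) m, ?_⟩
  have hcomm : cokernel.π ι ≫ v = i ≫ cokernel.π (ι ≫ i) := cokernel.π_desc _ _ _
  rw [← Abelian.Pseudoelement.comp_apply]
  show pseudoApply (cokernel.π ι ≫ v) m = b
  rw [hcomm, Abelian.Pseudoelement.comp_apply, hm, hx]

end Aux

section Main

variable (X F₁ : C → Prop)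

/-- The admissible-subobject closure of `X` inside `F₁`. -/
def AC : C → Prop := fun M => F₁ M ∧ ∃ (X' F : C) (f : M ⟶ X') (g : X' ⟶ F) (w : f ≫ g = 0),
  (ShortComplex.mk f g w).ShortExact ∧ X X' ∧ F₁ F

lemma AC_iso (hF₁ : AbsTorsionFreeClass F₁) : IsoClosedP (AC X F₁) := by
  intro M M' e hM
  obtain ⟨hMF, X', F', i, p, w, hse, hX', hF'⟩ := hM
  refine ⟨hF₁.1 e hMF, X', F', e.inv ≫ i, p,
    by rw [Category.assoc, w, Limits.comp_zero], ?_, hX', hF'⟩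
  exact ShortComplex.shortExact_of_iso
    (ShortComplex.isoMk (S₁ := ShortComplex.mk i p w) e (Iso.refl X') (Iso.refl F')
      (by simp) (by simp)) hse

lemma AC_kernel (hF₁ : AbsTorsionFreeClass F₁)
    {M N : C} (f : M ⟶ N) (hM : AC X F₁ M) (hN : F₁ N) : AC X F₁ (kernel f) := by
  obtain ⟨hMF, X', F', i, p, w, hse, hX', hF'⟩ := hM
  haveI := hse.mono_f
  haveI := hse.epi_g
  have h1 : F₁ (kernel f) := hF₁.2.1 (kernel.ι f) inferInstance hMF
  have h2 : F₁ (cokernel (kernel.ι f)) := by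
    have hm : Mono ((Abelian.coimageIsoImage f).hom ≫ kernel.ι (cokernel.π f)) :=
      mono_comp _ _
    exact hF₁.2.1 _ hm hN
  have h3 : F₁ (cokernel i) := by
    have e : F' ≅ cokernel i :=
      IsColimit.coconePointUniqueUpToIso hse.exact.gIsCokernel (colimit.isColimit _)
    exact hF₁.1 e hF'
  have h4 : F₁ (cokernel (kernel.ι f ≫ i)) := hF₁.2.2 _ (noether (kernel.ι f) i) h2 h3
  exact ⟨h1, X', cokernel (kernel.ι f ≫ i), kernel.ι f ≫ i, cokernel.π _,
    cokernel.condition _, sesOfMono _, hX', h4⟩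

lemma X_subset_AC (hF₁ : AbsTorsionFreeClass F₁) (hF₁X : ∀ M, X M → F₁ M)
    (hX0 : ∃ Z : C, IsZero Z ∧ X Z) {M : C} (hM : X M) : AC X F₁ M := by
  obtain ⟨Z, hZ, hXZ⟩ := hX0
  refine ⟨hF₁X M hM, M, Z, 𝟙 M, 0, Limits.comp_zero, ?_, hM, hF₁X Z hXZ⟩
  have hepi : Epi (0 : M ⟶ Z) := ⟨fun g h _ => hZ.eq_of_src g h⟩
  exact ShortComplex.ShortExact.mk'
    ((ShortComplex.Splitting.ofIsIsoOfIsZero _ (by dsimp; infer_instance) hZ).exact)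
    inferInstance hepi

lemma AC_subset (hF₁ : AbsTorsionFreeClass F₁) (hF₁X : ∀ M, X M → F₁ M)
    (hmin : ∀ G', AbsTorsionFreeClass G' → (∀ M, X M → G' M) → ∀ M, F₁ M → G' M)
    {G : C → Prop} (hG : KerRelClosed X G) (hXG : ∀ N, X N → G N)
    {M : C} (hM : AC X F₁ M) : G M := by
  set H : C → Prop := fun F => F₁ F ∧ ∀ (B : C) (p : B ⟶ F), G B → G (kernel p) with hH
  have hHtf : AbsTorsionFreeClass H := by
    refine ⟨?_, ?_, ?_⟩
    · rintro F F'' e ⟨h1, h2⟩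
      refine ⟨hF₁.1 e h1, fun B p hB => ?_⟩
      exact hG.1 (kernelCompMono p e.inv) (h2 B (p ≫ e.inv) hB)
    · rintro F' F j hj ⟨h1, h2⟩
      haveI := hj
      exact ⟨hF₁.2.1 j hj h1, fun B p hB => hG.1 (kernelCompMono p j) (h2 B (p ≫ j) hB)⟩
    · rintro S hS ⟨h1, h2⟩ ⟨h3, h4⟩
      haveI := hS.mono_f
      haveI := hS.epi_g
      refine ⟨hF₁.2.2 S hS h1 h3, fun B p hB => ?_⟩
      have hK₂ : G (kernel (p ≫ S.g)) := h4 B (p ≫ S.g) hB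
      set r : kernel (p ≫ S.g) ⟶ S.X₁ :=
        hS.exact.lift (kernel.ι (p ≫ S.g) ≫ p)
          (by rw [Category.assoc, kernel.condition]) with hr
      have hKr : G (kernel r) := h2 _ r hK₂
      have hrf : r ≫ S.f = kernel.ι (p ≫ S.g) ≫ p := hS.exact.lift_f _ _
      have ha : kernel.ι p ≫ (p ≫ S.g) = 0 := by
        rw [← Category.assoc, kernel.condition, Limits.zero_comp]
      set a : kernel p ⟶ kernel (p ≫ S.g) := kernel.lift _ (kernel.ι p) ha with hadef
      have har : a ≫ r = 0 := by
        rw [← cancel_mono S.f, Category.assoc, hrf, ← Category.assoc]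
        simp [hadef]
      set α : kernel p ⟶ kernel r := kernel.lift r a har with hα
      have hβ0 : (kernel.ι r ≫ kernel.ι (p ≫ S.g)) ≫ p = 0 := by
        rw [Category.assoc, ← hrf, ← Category.assoc, kernel.condition, Limits.zero_comp]
      set β : kernel r ⟶ kernel p := kernel.lift p _ hβ0 with hβ
      have e : kernel r ≅ kernel p := by
        refine ⟨β, α, ?_, ?_⟩
        · rw [← cancel_mono (kernel.ι r), ← cancel_mono (kernel.ι (p ≫ S.g))]
          simp [hα, hβ, hadef]
        · rw [← cancel_mono (kernel.ι p)]
          simp [hα, hβ, hadef]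
      exact hG.1 e hKr
  have hHX : ∀ N, X N → H N := fun N hN =>
    ⟨hF₁X N hN, fun B p hB => hG.2 p hB hN⟩
  obtain ⟨hMF, X', F', i, p, w, hse, hX', hF'⟩ := hM
  have hHF' : H F' := hmin H hHtf hHX F' hF'
  exact hG.1 (sesIsoKernel hse).symm (hHF'.2 X' p (hXG X' hX'))

end Main

theorem statement8 (X : C → Prop) (hXiso : IsoClosedP X)
    (hX0 : ∃ Z : C, IsZero Z ∧ X Z) (hXadd : ∀ A B : C, X A → X B → X (A ⊞ B))
    (F₁ : C → Prop)
    (hF₁ : AbsTorsionFreeClass F₁ ∧ (∀ M, X M → F₁ M) ∧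
      ∀ G, AbsTorsionFreeClass G → (∀ M, X M → G M) → ∀ M, F₁ M → G M) :
    ∀ M : C,
      ((F₁ M ∧ ∃ (X' F : C) (f : M ⟶ X') (g : X' ⟶ F) (w : f ≫ g = 0),
          (ShortComplex.mk f g w).ShortExact ∧ X X' ∧ F₁ F) ↔
        (∀ G, KerRelClosed X G → (∀ N, X N → G N) → G M)) ∧
      ((∀ G, KerRelClosed X G → (∀ N, X N → G N) → G M) ↔
        (∀ G, KernelClosed G → (∀ N, X N → G N) → G M)) := by
  intro M
  obtain ⟨hF, hFX, hmin⟩ := hF₁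
  have hACrel : KerRelClosed X (AC X F₁) := by
    refine ⟨AC_iso X F₁ hF, ?_⟩
    intro A B f hA hB
    exact AC_kernel X F₁ hF f hA (hFX B hB)
  have hACker : KernelClosed (AC X F₁) := by
    refine ⟨AC_iso X F₁ hF, ?_⟩
    intro A B f hA hB
    exact AC_kernel X F₁ hF f hA hB.1
  have hXAC : ∀ N, X N → AC X F₁ N := fun N hN => X_subset_AC X F₁ hF hFX hX0 hN
  constructor
  · constructor
    · intro hA G hG hXG
      exact AC_subset X F₁ hF hFX hmin hG hXG hA
    · intro hK
      exact hK (AC X F₁) hACrel hXAC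
  · constructor
    · intro hK G hG hXG
      exact hK G ⟨hG.1, fun A B f hA hB => hG.2 f hA (hXG B hB)⟩ hXG
    · intro hL G hG hXG
      exact AC_subset X F₁ hF hFX hmin hG hXG (hL (AC X F₁) hACker hXAC)
end Paper
end

section
/- Let Λ be a hereditary finite dimensional algebra over an algebraically closed field and X an extension-closed subcategory of mod Λ. Then X is closed under images (for every morphism f between objects of X, Im f ∈ X) if and only if X is closed under direct summands. -/
open CategoryTheory CategoryTheory.Limits

universe w v u

namespace Paper

variable {C : Type u} [Category.{v} C] [Abelian C]

set_option maxHeartbeats 1000000 in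
theorem key (Λ : Type u) [Ring Λ]
    (hHered : ∀ ⦃M P : ModuleCat.{u} Λ⦄ (i : M ⟶ P), Mono i → Projective P →
      Projective M)
    (X : ModuleCat.{u} Λ → Prop)
    (hXiso : ∀ ⦃A B : ModuleCat.{u} Λ⦄, (A ≅ B) → X A → X B)
    (hXext : ∀ (S : ShortComplex (ModuleCat.{u} Λ)), S.ShortExact → X S.X₁ → X S.X₃ → X S.X₂)
    (hSum : ∀ A B : ModuleCat.{u} Λ, X (A ⊞ B) → X A)
    {A B : ModuleCat.{u} Λ} (f : A ⟶ B) (hA : X A) (hB : X B) :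
    X (image f) := by
  classical
  let I : ModuleCat.{u} Λ := ModuleCat.of Λ (LinearMap.range f.hom)
  let π : A ⟶ I := ModuleCat.ofHom (LinearMap.rangeRestrict f.hom)
  let P : ModuleCat.{u} Λ := Projective.over B
  let p : P ⟶ B := Projective.π B
  have hpsurj : Function.Surjective p := (ModuleCat.epi_iff_surjective p).mp inferInstance
  let Q : Submodule Λ P := (LinearMap.range f.hom).comap p.hom
  let QM : ModuleCat.{u} Λ := ModuleCat.of Λ Q
  let ι : QM ⟶ P := ModuleCat.ofHom Q.subtype
  haveI : Mono ι := (ModuleCat.mono_iff_injective ι).mpr Subtype.val_injective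
  haveI hQproj : Projective QM := hHered ι ‹_› inferInstance
  haveI : Epi π := (ModuleCat.epi_iff_surjective π).mpr (LinearMap.surjective_rangeRestrict f.hom)
  let pQ : QM ⟶ I :=
    ModuleCat.ofHom (LinearMap.codRestrict (LinearMap.range f.hom) (p.hom ∘ₗ Q.subtype)
      (fun q => q.2))
  let h : QM ⟶ A := Projective.factorThru pQ π
  have hfac : h ≫ π = pQ := Projective.factorThru_comp pQ π
  have hfac' : ∀ q : Q, f (h q) = p (Q.subtype q) := by
    intro q
    have h1 : π (h q) = pQ q := by
      show (h ≫ π) q = pQ q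
      rw [hfac]
    exact congrArg Subtype.val h1
  let ρ : (QM : Type u) →ₗ[Λ] (A × P) := LinearMap.prod h.hom (-(Q.subtype))
  have hρ : ∀ q : Q, ρ q = (h q, -(Q.subtype q)) := fun q => rfl
  let S : Submodule Λ (A × P) := LinearMap.range ρ
  let E : Type u := (A × P) ⧸ S
  let jE : (A : Type u) →ₗ[Λ] E := S.mkQ ∘ₗ LinearMap.inl Λ A P
  have hjE : ∀ a : A, jE a = Submodule.Quotient.mk (a, 0) := fun a => rfl
  let gbar : (A × P) →ₗ[Λ] B :=
    (f.hom ∘ₗ LinearMap.fst Λ A P) + (p.hom ∘ₗ LinearMap.snd Λ A P)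
  have hgbar : ∀ z : A × P, gbar z = f z.1 + p z.2 := fun z => rfl
  have hSle : S ≤ LinearMap.ker gbar := by
    rintro x ⟨q, rfl⟩
    rw [LinearMap.mem_ker, hρ, hgbar]
    simp [hfac' q]
  let g : E →ₗ[Λ] B := S.liftQ gbar hSle
  have hgmk : ∀ z : A × P, g (Submodule.Quotient.mk z) = f z.1 + p z.2 := by
    intro z
    rw [show g (Submodule.Quotient.mk z) = gbar z from S.liftQ_apply gbar z, hgbar]
  let M : ModuleCat.{u} Λ := ModuleCat.of Λ ((LinearMap.range f.hom) × E)
  let α : (A : Type u) →ₗ[Λ] ((LinearMap.range f.hom) × E) :=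
    LinearMap.prod (LinearMap.rangeRestrict f.hom) jE
  have hα : ∀ a : A, α a = (LinearMap.rangeRestrict f.hom a, jE a) := fun a => rfl
  let β : ((LinearMap.range f.hom) × E) →ₗ[Λ] (B : Type u) :=
    ((LinearMap.range f.hom).subtype ∘ₗ LinearMap.fst Λ (LinearMap.range f.hom) E)
      - (g ∘ₗ LinearMap.snd Λ (LinearMap.range f.hom) E)
  have hβ : ∀ (y : LinearMap.range f.hom) (e : E), β (y, e) = (y : B) - g e := fun y e => rfl
  have hβα : ∀ a : A, β (α a) = 0 := by
    intro a
    rw [hα, hβ, hjE, hgmk]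
    simp
  let Sc : ShortComplex (ModuleCat.{u} Λ) :=
    ShortComplex.mk (X₁ := A) (X₂ := M) (X₃ := B) (ModuleCat.ofHom α) (ModuleCat.ofHom β)
      (by ext a; exact hβα a)
  have hmono : Mono Sc.f := by
    rw [ModuleCat.mono_iff_injective]
    intro a a' haa'
    have h2 : jE a = jE a' := congrArg Prod.snd haa'
    rw [hjE, hjE] at h2
    have h3 : ((a, (0:P)) - (a', 0)) ∈ S := by
      rwa [← Submodule.Quotient.mk_eq_zero S, Submodule.Quotient.mk_sub, sub_eq_zero]
    obtain ⟨q, hq⟩ := h3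
    rw [hρ] at hq
    have h5 : -(Q.subtype q) = (0:P) - 0 := congrArg Prod.snd hq
    have hq0 : q = 0 := by
      refine Submodule.injective_subtype Q ?_
      rw [map_zero]
      simpa using h5
    have h7 : h q = a - a' := congrArg Prod.fst hq
    rw [hq0, map_zero] at h7
    exact sub_eq_zero.mp h7.symm
  have hepi : Epi Sc.g := by
    rw [ModuleCat.epi_iff_surjective]
    intro b
    obtain ⟨x, hx⟩ := hpsurj b
    refine ⟨(0, Submodule.Quotient.mk (0, -x)), ?_⟩
    show β (0, Submodule.Quotient.mk (0, -x)) = b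
    rw [hβ, hgmk]
    simp [hx]
  have hexact : Sc.Exact := by
    rw [ShortComplex.moduleCat_exact_iff]
    rintro ⟨y, e⟩ hye
    obtain ⟨⟨a, x⟩, rfl⟩ := Submodule.Quotient.mk_surjective S e
    have hy : (y : B) = f a + p x := by
      have h1 : β (y, Submodule.Quotient.mk (a, x)) = 0 := hye
      rw [hβ, hgmk, sub_eq_zero] at h1
      exact h1
    have hxQ : x ∈ Q := by
      show p x ∈ LinearMap.range f.hom
      have hpx : p x = (y : B) - f a := by rw [hy]; abel
      rw [hpx]
      exact Submodule.sub_mem _ y.2 ⟨a, rfl⟩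
    refine ⟨a + h ⟨x, hxQ⟩, ?_⟩
    show α (a + h ⟨x, hxQ⟩) = (y, Submodule.Quotient.mk (a, x))
    rw [hα]
    refine Prod.ext (Subtype.val_injective ?_) ?_
    · show f (a + h ⟨x, hxQ⟩) = (y : B)
      rw [map_add, hfac' ⟨x, hxQ⟩, hy]
      rfl
    · show jE (a + h ⟨x, hxQ⟩) = Submodule.Quotient.mk (a, x)
      rw [hjE, ← sub_eq_zero, ← Submodule.Quotient.mk_sub, Submodule.Quotient.mk_eq_zero]
      refine ⟨⟨x, hxQ⟩, ?_⟩
      rw [hρ]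
      show (_, _) = (_, _)
      refine Prod.ext ?_ ?_
      · show h ⟨x, hxQ⟩ = a + h ⟨x, hxQ⟩ - a
        abel
      · show -(Q.subtype ⟨x, hxQ⟩) = (0:P) - x
        simp
  have hse : Sc.ShortExact := ShortComplex.ShortExact.mk' hexact hmono hepi
  have hM : X M := hXext Sc hse hA hB
  have hbi : X (ModuleCat.of Λ (LinearMap.range f.hom) ⊞ ModuleCat.of Λ E) :=
    hXiso (ModuleCat.biprodIsoProd (ModuleCat.of Λ (LinearMap.range f.hom)) (ModuleCat.of Λ E)).symm hM
  exact hXiso (ModuleCat.imageIsoRange f).symm (hSum _ _ hbi)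


/-- `Λ` hereditary is expressed by: every submodule of a
projective module is projective. -/
theorem statement17 (𝕜 : Type u) [Field 𝕜] [IsAlgClosed 𝕜]
    (Λ : Type u) [Ring Λ] [Algebra 𝕜 Λ] [FiniteDimensional 𝕜 Λ]
    (hHered : ∀ ⦃M P : ModuleCat.{u} Λ⦄ (i : M ⟶ P), Mono i → Projective P →
      Projective M)
    (X : ModuleCat.{u} Λ → Prop)
    (hXfg : ∀ M, X M → Module.Finite Λ M)
    (hXiso : IsoClosedP X)
    (hXext : ClosedUnderExtensions X) :
    (∀ ⦃A B : ModuleCat.{u} Λ⦄ (f : A ⟶ B), X A → X B → X (image f)) ↔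
      (∀ A B : ModuleCat.{u} Λ, X (A ⊞ B) → X A) := by
  constructor
  · intro hIm A B hAB
    haveI : StrongEpi (biprod.fst : A ⊞ B ⟶ A) := strongEpi_of_epi _
    exact hXiso (image.isoStrongEpiMono (f := (biprod.fst ≫ biprod.inl : A ⊞ B ⟶ A ⊞ B))
        biprod.fst biprod.inl rfl).symm (hIm _ hAB hAB)
  · intro hSum A B f hA hB
    exact key Λ hHered X hXiso hXext hSum f hA hB
end Paper
end

section
/- Let A be an abelian category and suppose given a commutative 3×3-style diagram with exact columns 0 → X → X' → X'' → 0 (with X'' appearing in a row 0 → X'' → Y'' → Z'' → 0 which is exact), exact rows X → Y → Z → 0, X' → Y' → Z' → 0 (with Y → Y' → Y'' and Z → Z' → Z'' exact columns with Y → Y', Z → Z' monomorphisms, i.e., columns 0 → Y → Y' → Y'' and 0 → Z → Z' → Z''), and h : X → Y' the composite X → X' → Y' (= X → Y → Y'). Then the sequence X →(h) Y' →((g', y')) Z' ⊕ Y'' →((−z', g'')) Z'' → 0 is exact, where g' : Y' → Z', y' : Y' → Y'', z' : Z' → Z'', g'' : Y'' → Z''. -/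
open CategoryTheory CategoryTheory.Limits

universe w v u

namespace Paper

variable {C : Type u} [Category.{v} C] [Abelian C]

theorem statement18 {X X' X'' Y Y' Y'' Z Z' Z'' : C}
    (x : X ⟶ X') (x' : X' ⟶ X'') (y : Y ⟶ Y') (y' : Y' ⟶ Y'')
    (z : Z ⟶ Z') (z' : Z' ⟶ Z'')
    (f : X ⟶ Y) (g : Y ⟶ Z) (f' : X' ⟶ Y') (g' : Y' ⟶ Z')
    (f'' : X'' ⟶ Y'') (g'' : Y'' ⟶ Z'')
    (wx : x ≫ x' = 0) (hcolX : (ShortComplex.mk x x' wx).ShortExact)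
    (wr'' : f'' ≫ g'' = 0) (hrowX'' : (ShortComplex.mk f'' g'' wr'').ShortExact)
    (wr : f ≫ g = 0) (hrow : (ShortComplex.mk f g wr).Exact) (hg : Epi g)
    (wr' : f' ≫ g' = 0) (hrow' : (ShortComplex.mk f' g' wr').Exact) (hg' : Epi g')
    (wy : y ≫ y' = 0) (hcolY : (ShortComplex.mk y y' wy).Exact) (hy : Mono y)
    (wz : z ≫ z' = 0) (hcolZ : (ShortComplex.mk z z' wz).Exact) (hz : Mono z)
    (c1 : f ≫ y = x ≫ f') (c2 : g ≫ z = y ≫ g')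
    (c3 : f' ≫ y' = x' ≫ f'') (c4 : g' ≫ z' = y' ≫ g'') :
    ∃ (w₁ : (x ≫ f') ≫ biprod.lift g' y' = 0)
      (w₂ : biprod.lift g' y' ≫ biprod.desc (-z') g'' = 0),
      (ShortComplex.mk (x ≫ f') (biprod.lift g' y') w₁).Exact ∧
      (ShortComplex.mk (biprod.lift g' y') (biprod.desc (-z') g'') w₂).Exact ∧
      Epi (biprod.desc (-z') g'') := by
  haveI : Mono f'' := hrowX''.mono_f
  haveI : Epi g'' := hrowX''.epi_g
  haveI : Epi x' := hcolX.epi_g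
  have e1 : x ≫ f' ≫ g' = 0 := by rw [wr', comp_zero]
  have e2 : x ≫ f' ≫ y' = 0 := by rw [c3, ← Category.assoc, wx, zero_comp]
  have w₁ : (x ≫ f') ≫ biprod.lift g' y' = 0 := by
    apply biprod.hom_ext
    · simp [Category.assoc, e1]
    · simp [Category.assoc, e2]
  have w₂ : biprod.lift g' y' ≫ biprod.desc (-z') g'' = 0 := by
    simp [c4]
  refine ⟨w₁, w₂, ?_, ?_, ?_⟩
  · rw [ShortComplex.exact_iff_exact_up_to_refinements]
    intro T u hu
    have hg'0 : u ≫ g' = 0 := by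
      have := hu =≫ biprod.fst
      simpa using this
    have hy'0 : u ≫ y' = 0 := by
      have := hu =≫ biprod.snd
      simpa using this
    obtain ⟨T₁, π₁, hπ₁, v, hv⟩ := hrow'.exact_up_to_refinements u hg'0
    have hvx' : v ≫ x' = 0 := by
      rw [← cancel_mono f'']
      have : v ≫ f' ≫ y' = 0 := by
        rw [← Category.assoc, ← hv, Category.assoc, hy'0, comp_zero]
      rw [Category.assoc, ← c3, this, zero_comp]
    obtain ⟨T₂, π₂, hπ₂, w, hw⟩ := hcolX.exact.exact_up_to_refinements v hvx'
    haveI := hπ₁; haveI := hπ₂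
    refine ⟨T₂, π₂ ≫ π₁, inferInstance, w, ?_⟩
    rw [Category.assoc, hv, ← Category.assoc, hw, Category.assoc]
  · rw [ShortComplex.exact_iff_exact_up_to_refinements]
    intro T u hu
    let v : T ⟶ Z' ⊞ Y'' := u
    have key : (v ≫ biprod.fst) ≫ z' = (v ≫ biprod.snd) ≫ g'' := by
      have h : v ≫ biprod.desc (-z') g'' = 0 := hu
      simp only [biprod.desc_eq, Preadditive.comp_add, Preadditive.comp_neg,
        Category.assoc, neg_add_eq_zero] at h
      simpa only [Category.assoc] using h
    obtain ⟨T₁, π₁, hπ₁, b', hb'⟩ :=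
      surjective_up_to_refinements_of_epi g' (v ≫ biprod.fst)
    have aux : b' ≫ y' ≫ g'' = π₁ ≫ (v ≫ biprod.snd) ≫ g'' := by
      rw [← c4, ← Category.assoc, ← hb', Category.assoc, key]
    have hdiff : (π₁ ≫ (v ≫ biprod.snd) - b' ≫ y') ≫ g'' = 0 := by
      simp only [Preadditive.sub_comp, Category.assoc]
      simp only [Category.assoc] at aux
      rw [aux, sub_self]
    obtain ⟨T₂, π₂, hπ₂, a'', ha''⟩ :=
      hrowX''.exact.exact_up_to_refinements _ hdiff
    obtain ⟨T₃, π₃, hπ₃, a', ha'⟩ := surjective_up_to_refinements_of_epi x' a''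
    haveI := hπ₁; haveI := hπ₂; haveI := hπ₃
    refine ⟨T₃, π₃ ≫ π₂ ≫ π₁, inferInstance,
      π₃ ≫ π₂ ≫ b' + a' ≫ f', ?_⟩
    show (π₃ ≫ π₂ ≫ π₁) ≫ v = (π₃ ≫ π₂ ≫ b' + a' ≫ f') ≫ biprod.lift g' y'
    apply biprod.hom_ext
    · have t1 : a' ≫ f' ≫ g' = 0 := by rw [wr', comp_zero]
      simp only [Category.assoc, biprod.lift_fst, Preadditive.add_comp, t1,
        add_zero]
      rw [← hb']
    · have t2 : a' ≫ f' ≫ y' = π₃ ≫ π₂ ≫ (π₁ ≫ (v ≫ biprod.snd) - b' ≫ y') := by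
        rw [c3, ← Category.assoc, ← ha', Category.assoc, ← ha'']
      simp only [Category.assoc, biprod.lift_snd, Preadditive.add_comp]
      rw [t2]
      simp only [Preadditive.comp_sub, Category.assoc]
      abel
  · have : biprod.inr ≫ biprod.desc (-z') g'' = g'' := by simp
    exact epi_of_epi_fac this

end Paper
end
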